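/- arXiv:0901.3691 — 5 statements merged into one kernel-verified Lean document; each statement's English description precedes it below -/
import Mathlib

section
/- For any positive integers n, a, b with gcd(a, b) = 1, n! divides the product (a+b)(a+2b)···(a+nb) if and only if gcd(n!, b) = 1. -/
/-!
Every factor `a + b i` is coprime to `b`, hence so is the product and any divisor of it such as
`n!`. Conversely, if `b` is invertible modulo `n!` and `c ≡ b⁻¹ a`, then
`∏ (a + b i) ≡ bⁿ ∏ (c + i) = bⁿ (c + 1)(c + 2)⋯(c + n)` modulo `n!`, and a product of `n`
consecutive integers is divisible by `n!`.
-/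

open Finset Nat

theorem Nat.prod_Icc_add_eq_ascFactorial (m n : ℕ) :
    ∏ i ∈ Icc 1 n, (m + i) = (m + 1).ascFactorial n := by
  rw [← Finset.Ico_add_one_right_eq_Icc, prod_Ico_eq_prod_range, Nat.ascFactorial_eq_prod_range]
  exact prod_congr rfl fun i _ => by ring

theorem Nat.factorial_dvd_prod_Icc_add (m n : ℕ) : n ! ∣ ∏ i ∈ Icc 1 n, (m + i) := by
  rw [Nat.prod_Icc_add_eq_ascFactorial]
  exact Nat.factorial_dvd_ascFactorial _ _

theorem Nat.Coprime.prod_add_mul_left {ι : Type*} {a b : ℕ} (hab : Nat.Coprime a b)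
    (s : Finset ι) (f : ι → ℕ) : Nat.Coprime (∏ i ∈ s, (a + b * f i)) b :=
  Nat.Coprime.prod_left fun i _ => (Nat.coprime_add_mul_left_left a b (f i)).2 hab

theorem Nat.factorial_dvd_prod_Icc_add_mul {n b : ℕ} (hb : Nat.Coprime b n !) (a : ℕ) :
    n ! ∣ ∏ i ∈ Icc 1 n, (a + b * i) := by
  have : NeZero n ! := ⟨Nat.factorial_ne_zero n⟩
  set c : ℕ := ((b : ZMod n !)⁻¹ * a).val
  have hbc : (b : ZMod n !) * c = a := by
    rw [ZMod.natCast_zmod_val, ← mul_assoc, ZMod.coe_mul_inv_eq_one b hb, one_mul]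
  have hcongr : ((∏ i ∈ Icc 1 n, (a + b * i) : ℕ) : ZMod n !)
      = (b : ZMod n !) ^ n * ((∏ i ∈ Icc 1 n, (c + i) : ℕ) : ZMod n !) := by
    have hpow : (b : ZMod n !) ^ n = ∏ _i ∈ Icc 1 n, (b : ZMod n !) := by simp
    push_cast
    rw [hpow, ← prod_mul_distrib]
    exact prod_congr rfl fun i _ => by rw [mul_add, hbc]
  rw [← ZMod.natCast_eq_zero_iff, hcongr,
    (ZMod.natCast_eq_zero_iff _ _).2 (Nat.factorial_dvd_prod_Icc_add c n), mul_zero]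

theorem stmt0_general (n a b : ℕ)
    (hab : Nat.gcd a b = 1) :
    (n.factorial ∣ ∏ i ∈ Finset.Icc 1 n, (a + b * i)) ↔
      Nat.gcd n.factorial b = 1 := by
  refine ⟨fun hdvd => ?_, fun hcop => ?_⟩
  · exact Nat.Coprime.coprime_dvd_left hdvd (Nat.Coprime.prod_add_mul_left hab _ _)
  · exact Nat.factorial_dvd_prod_Icc_add_mul (Nat.Coprime.symm hcop) a

theorem stmt0 (n a b : ℕ) (hn : 0 < n) (ha : 0 < a) (hb : 0 < b)
    (hab : Nat.gcd a b = 1) :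
    (n.factorial ∣ ∏ i ∈ Finset.Icc 1 n, (a + b * i)) ↔
      Nat.gcd n.factorial b = 1 :=
  stmt0_general n a b hab
end

section
/- For any positive integers n, a, b with gcd(a, b) = 1 and gcd(n!, b) = 1, the integer (a+b)(a+2b)···(a+nb)/n! can be written as a product ∏_{i=1}^n a_i of positive integers a_i such that a_i divides a + b·i for each i, and gcd(a_i, a_j) = 1 for all 1 ≤ i ≠ j ≤ n. -/
/-!
Let `P = ∏_{i=1}^n (a + b i)`. For a prime `p ∤ b` the `i` with `p^k ∣ a + b i` form one residue
class mod `p^k`, so there are `⌊n/p^k⌋` or `⌊n/p^k⌋ + 1` of them in `[1, n]`, and none once `k`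
exceeds `M = max_i v_p(a + b i)`. Summing over `k` as in Legendre's formula gives
`v_p(n!) ≤ v_p(P) ≤ v_p(n!) + M`. Primes dividing `b` divide neither `n!` nor `P`, so `n! ∣ P`, and
for every prime `p` of `N = P / n!` the whole power `p^{v_p(N)}` divides a single factor `a + b i`.
Assigning each prime of `N` to such an `i` and letting `a_i` collect the prime powers assigned to
`i` gives the required factorisation.
-/

open Finset

lemma Nat.exists_dvd_add_mul_iff_modEq {m b : ℕ} [NeZero m] (hbm : b.Coprime m) (c : ℕ) :
    ∃ v, ∀ j, m ∣ c + b * j ↔ j ≡ v [MOD m] := by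
  set u := ZMod.unitOfCoprime b hbm
  refine ⟨(-(c : ZMod m) * ↑u⁻¹).val, fun j => ?_⟩
  rw [← ZMod.natCast_eq_zero_iff, ← ZMod.natCast_eq_natCast_iff, ZMod.natCast_val, ZMod.cast_id',
    id, Units.eq_mul_inv_iff_mul_eq, ZMod.coe_unitOfCoprime, eq_neg_iff_add_eq_zero]
  push_cast
  rw [mul_comm, add_comm]

lemma card_filter_dvd_add_mul_Icc_bounds {m b : ℕ} (hm : 0 < m) (hbm : b.Coprime m) (a n : ℕ) :
    n / m ≤ #{i ∈ Icc 1 n | m ∣ a + b * i} ∧ #{i ∈ Icc 1 n | m ∣ a + b * i} ≤ n / m + 1 := by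
  have : NeZero m := ⟨hm.ne'⟩
  obtain ⟨v, hv⟩ := Nat.exists_dvd_add_mul_iff_modEq hbm (a + b)
  have hv' : ∀ j, m ∣ a + b * (j + 1) ↔ j ≡ v [MOD m] := fun j => by
    convert hv j using 2; ring
  have hshift : #{i ∈ Icc 1 n | m ∣ a + b * i} = n.count (· ≡ v [MOD m]) := by
    rw [Nat.count_eq_card_filter_range]
    refine card_nbij' (· - 1) (· + 1) ?_ ?_ ?_ ?_ <;> intro i hi <;>
      simp only [coe_filter, mem_Icc, mem_range, Set.mem_ofPred_eq, ← hv'] at hi ⊢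
    · rw [Nat.sub_add_cancel hi.1.1]; exact ⟨by omega, hi.2⟩
    · exact ⟨by omega, hi.2⟩
    · omega
    · omega
  rw [hshift, Nat.count_modEq_card _ hm]
  split_ifs <;> omega

lemma Nat.prod_dvd_of_coprime {ι : Type*} {s : Finset ι} {g : ι → ℕ} {x : ℕ}
    (hcop : (s : Set ι).Pairwise (Function.onFun Nat.Coprime g)) (hdvd : ∀ i ∈ s, g i ∣ x) :
    ∏ i ∈ s, g i ∣ x := by
  have := Finset.prod_dvd_of_coprime (R := ℤ) (I := ι) (s := fun i => (g i : ℤ))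
    (hcop.mono' fun _ _ h => Nat.isCoprime_iff_coprime.2 h)
    (fun i hi => Int.natCast_dvd_natCast.2 (hdvd i hi))
  exact_mod_cast this

lemma Nat.factorization_prod_eq_sum_card {ι : Type*} (s : Finset ι) {x : ι → ℕ} {p B : ℕ}
    (hp : p.Prime) (hx : ∀ i ∈ s, x i ≠ 0) (hB : ∀ i ∈ s, x i < p ^ B) :
    (∏ i ∈ s, x i).factorization p = ∑ k ∈ Ico 1 B, #{i ∈ s | p ^ k ∣ x i} := by
  rw [Nat.factorization_prod hx, Finset.sum_apply']
  calc ∑ i ∈ s, (x i).factorization p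
      = ∑ i ∈ s, ∑ k ∈ Ico 1 B, if p ^ k ∣ x i then 1 else 0 := by
        refine sum_congr rfl fun i hi => ?_
        rw [Nat.factorization_eq_card_pow_dvd_of_lt hp (Nat.pos_of_ne_zero (hx i hi)) (hB i hi),
          card_filter]
    _ = _ := by rw [sum_comm]; simp only [card_filter]

-- Any `B` with `n` and every factor below `p ^ B` is a common cutoff for both Legendre-type sums.
lemma factorization_prod_add_mul_eq_sum_card {p a : ℕ} (hp : p.Prime) (ha : 0 < a) (b n : ℕ) :
    (∏ i ∈ Icc 1 n, (a + b * i)).factorization p =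
      ∑ k ∈ Ico 1 (a + b * n + n + 1), #{i ∈ Icc 1 n | p ^ k ∣ a + b * i} := by
  refine Nat.factorization_prod_eq_sum_card _ hp (fun i _ => by positivity) fun i hi => ?_
  calc a + b * i ≤ a + b * n + n + 1 := by have := Nat.mul_le_mul_left b (mem_Icc.1 hi).2; omega
    _ < p ^ (a + b * n + n + 1) := Nat.lt_pow_self hp.one_lt

lemma factorization_factorial_eq_sum_div {p : ℕ} (hp : p.Prime) (a b n : ℕ) :
    n.factorial.factorization p = ∑ k ∈ Ico 1 (a + b * n + n + 1), n / p ^ k :=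
  Nat.factorization_factorial hp <| by have := Nat.log_le_self p n; omega

lemma factorization_factorial_le_factorization_prod_add_mul {p a b : ℕ} (hp : p.Prime)
    (hpb : ¬ p ∣ b) (ha : 0 < a) (n : ℕ) :
    n.factorial.factorization p ≤ (∏ i ∈ Icc 1 n, (a + b * i)).factorization p := by
  rw [factorization_factorial_eq_sum_div hp a b, factorization_prod_add_mul_eq_sum_card hp ha]
  exact sum_le_sum fun k _ => (card_filter_dvd_add_mul_Icc_bounds (pow_pos hp.pos k)
    ((hp.coprime_iff_not_dvd.2 hpb).symm.pow_right k) a n).1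

lemma factorization_prod_add_mul_le {p a b n M : ℕ} (hp : p.Prime) (hpb : ¬ p ∣ b) (ha : 0 < a)
    (hM : ∀ i ∈ Icc 1 n, (a + b * i).factorization p ≤ M) :
    (∏ i ∈ Icc 1 n, (a + b * i)).factorization p ≤ n.factorial.factorization p + M := by
  rw [factorization_factorial_eq_sum_div hp a b, factorization_prod_add_mul_eq_sum_card hp ha]
  have hcount : ∀ k, #{i ∈ Icc 1 n | p ^ k ∣ a + b * i} ≤ n / p ^ k + if k ≤ M then 1 else 0 := by
    intro k
    split_ifs with hkM
    · exact (card_filter_dvd_add_mul_Icc_bounds (pow_pos hp.pos k)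
        ((hp.coprime_iff_not_dvd.2 hpb).symm.pow_right k) a n).2
    · refine (card_eq_zero.2 <| filter_eq_empty_iff.2 fun i hi hdvd => hkM ?_).trans_le
        (Nat.zero_le _)
      exact ((hp.pow_dvd_iff_le_factorization (by positivity)).1 hdvd).trans (hM i hi)
  calc _ ≤ ∑ k ∈ Ico 1 (a + b * n + n + 1), (n / p ^ k + if k ≤ M then 1 else 0) :=
        sum_le_sum fun k _ => hcount k
    _ ≤ _ := by
      rw [sum_add_distrib, sum_boole]
      gcongr
      exact (card_le_card fun k hk => by simp at hk ⊢; omega).trans (Nat.card_Icc 1 M).le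

lemma Nat.exists_prod_eq_pairwise_coprime_dvd {ι : Type*} [DecidableEq ι] {N : ℕ} (hN : N ≠ 0)
    {s : Finset ι} {x : ι → ℕ} (hx : ∀ i ∈ s, x i ≠ 0)
    (h : ∀ p ∈ N.primeFactors, ∃ i ∈ s, N.factorization p ≤ (x i).factorization p) :
    ∃ f : ι → ℕ, N = ∏ i ∈ s, f i ∧ (∀ i ∈ s, 0 < f i ∧ f i ∣ x i) ∧
      ∀ i ∈ s, ∀ j ∈ s, i ≠ j → Nat.Coprime (f i) (f j) := by
  obtain hN1 | ⟨p₀, hp₀⟩ := N.primeFactors.eq_empty_or_nonempty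
  · obtain rfl : N = 1 := (Nat.primeFactors_eq_empty.1 hN1).resolve_left hN
    exact ⟨fun _ => 1, by simp, by simp, by simp⟩
  have : Nonempty ι := ⟨(h p₀ hp₀).choose⟩
  choose! c hcs hle using h
  have hcop {p q : ℕ} (hp : p ∈ N.primeFactors) (hq : q ∈ N.primeFactors) (hpq : p ≠ q) :
      Nat.Coprime (p ^ N.factorization p) (q ^ N.factorization q) :=
    Nat.Coprime.pow _ _ ((Nat.coprime_primes (Nat.prime_of_mem_primeFactors hp)
      (Nat.prime_of_mem_primeFactors hq)).2 hpq)
  refine ⟨fun i => ∏ p ∈ N.primeFactors with c p = i, p ^ N.factorization p,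
    ?_, fun i hi => ⟨?_, ?_⟩, fun i _ j _ hij => ?_⟩
  · rw [prod_fiberwise_of_maps_to hcs]
    exact Nat.prod_primeFactors_pow_factorization hN
  · exact prod_pos fun p hp => pow_pos (Nat.prime_of_mem_primeFactors (mem_filter.1 hp).1).pos _
  · refine Nat.prod_dvd_of_coprime (fun p hp q hq hpq => hcop (mem_filter.1 hp).1
      (mem_filter.1 hq).1 hpq) fun p hp => ?_
    obtain ⟨hpN, rfl⟩ := mem_filter.1 hp
    exact ((Nat.prime_of_mem_primeFactors hpN).pow_dvd_iff_le_factorization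
      (hx _ (hcs p hpN))).2 (hle p hpN)
  · refine Nat.Coprime.prod_left fun p hp => Nat.Coprime.prod_right fun q hq => ?_
    obtain ⟨hpN, rfl⟩ := mem_filter.1 hp
    obtain ⟨hqN, hcq⟩ := mem_filter.1 hq
    exact hcop hpN hqN fun hpq => hij (hpq ▸ hcq)

lemma factorial_dvd_prod_add_mul {a b : ℕ} (ha : 0 < a) {n : ℕ} (hnb : n.factorial.Coprime b) :
    n.factorial ∣ ∏ i ∈ Icc 1 n, (a + b * i) := by
  refine (Nat.factorization_le_iff_dvd n.factorial_ne_zero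
    (prod_ne_zero_iff.2 fun i _ => by positivity)).1 fun p => ?_
  by_cases hp : p.Prime
  · by_cases hpb : p ∣ b
    · rw [Nat.factorization_eq_zero_of_not_dvd fun hpn =>
        hp.not_dvd_one (hnb ▸ Nat.dvd_gcd hpn hpb)]
      exact Nat.zero_le _
    · exact factorization_factorial_le_factorization_prod_add_mul hp hpb ha n
  · simp [Nat.factorization_eq_zero_of_not_prime _ hp]

theorem stmt3_general (n a b : ℕ) (ha : 0 < a)
    (hab : Nat.gcd a b = 1) (hnb : Nat.gcd n.factorial b = 1) :
    ∃ f : ℕ → ℕ,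
      (∏ i ∈ Finset.Icc 1 n, (a + b * i)) / n.factorial =
        ∏ i ∈ Finset.Icc 1 n, f i ∧
      (∀ i ∈ Finset.Icc 1 n, 0 < f i ∧ f i ∣ a + b * i) ∧
      (∀ i ∈ Finset.Icc 1 n, ∀ j ∈ Finset.Icc 1 n, i ≠ j →
        Nat.gcd (f i) (f j) = 1) := by
  set P := ∏ i ∈ Icc 1 n, (a + b * i)
  have hdvd : n.factorial ∣ P := factorial_dvd_prod_add_mul ha hnb
  have hN : P / n.factorial ≠ 0 :=
    (Nat.div_pos (Nat.le_of_dvd (prod_pos fun i _ => by positivity) hdvd) n.factorial_pos).ne'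
  refine Nat.exists_prod_eq_pairwise_coprime_dvd hN (fun i _ => by positivity) fun p hpN => ?_
  have hp := Nat.prime_of_mem_primeFactors hpN
  obtain ⟨i₀, hi₀, hpi₀⟩ := hp.prime.exists_mem_finset_dvd <|
    (Nat.dvd_of_mem_primeFactors hpN).trans (Nat.div_dvd_of_dvd hdvd)
  have hpb : ¬ p ∣ b := fun hpb =>
    hp.not_dvd_one (hab ▸ Nat.dvd_gcd ((Nat.dvd_add_left (hpb.mul_right i₀)).1 hpi₀) hpb)
  obtain ⟨i, hi, hmax⟩ :=
    exists_max_image (Icc 1 n) (fun i => (a + b * i).factorization p) ⟨i₀, hi₀⟩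
  have : P.factorization p ≤ _ := factorization_prod_add_mul_le hp hpb ha hmax
  refine ⟨i, hi, ?_⟩
  rw [Nat.factorization_div hdvd, Finsupp.tsub_apply]
  omega

theorem stmt3 (n a b : ℕ) (hn : 0 < n) (ha : 0 < a) (hb : 0 < b)
    (hab : Nat.gcd a b = 1) (hnb : Nat.gcd n.factorial b = 1) :
    ∃ f : ℕ → ℕ,
      (∏ i ∈ Finset.Icc 1 n, (a + b * i)) / n.factorial =
        ∏ i ∈ Finset.Icc 1 n, f i ∧
      (∀ i ∈ Finset.Icc 1 n, 0 < f i ∧ f i ∣ a + b * i) ∧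
      (∀ i ∈ Finset.Icc 1 n, ∀ j ∈ Finset.Icc 1 n, i ≠ j →
        Nat.gcd (f i) (f j) = 1) :=
  stmt3_general n a b ha hab hnb
end

section
/- For any positive integers n, a, b with gcd(a, b) = 1, gcd(n!, b) = 1, and a + b > ∏_{p ≤ n} p^{⌊log_p n⌋} (the least common multiple of 1, 2, ..., n), the integer (a+b)(a+2b)···(a+nb)/n! can be written as ∏_{i=1}^n a_i where each a_i is an integer greater than 1, a_i divides a + b·i, and gcd(a_i, a_j) = 1 for all 1 ≤ i ≠ j ≤ n. -/
/-!
Write `c i = a + b * i` and `P = ∏ c i`. For a prime `p ∤ b` the indices `i ≤ n` with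
`p ^ k ∣ c i` form one residue class modulo `p ^ k`, so there are `⌊n / p ^ k⌋` or
`⌊n / p ^ k⌋ + 1` of them. Summing over `k` and comparing with Legendre's formula gives
`n! ∣ P`; moreover, deleting an index `I p` at which `vₚ(c i)` is maximal removes one element
from every nonempty class, so the remaining terms contribute at most `vₚ(n!)`, i.e.
`vₚ(P / n!) ≤ vₚ(c (I p))`. Hence distributing each prime power of `P / n!` to the index `I p`
gives pairwise coprime factors `f i ∣ c i` with product `P / n!`.

If some `f i = 1`, then every prime power `q ^ k` exactly dividing `c i` is at most `n`: when
`I q ≠ i` it also divides `c (I q)`, hence the nonzero difference `I q - i`; when `I q = i`,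
`f i = 1` means `v_q(P) = v_q(n!)`, whereas `q ^ k > n` would make the `k`-th class nonempty
although `⌊n / q ^ k⌋ = 0`. So `c i` divides `lcm(1, …, n) < a + b ≤ c i`, which is absurd.
-/

open Finset
open scoped Nat

namespace Nat

section ArithmeticProgression

variable {a b m n p : ℕ}

theorem modEq_of_dvd_add_mul (hb : b.Coprime m) {i j : ℕ} (hi : m ∣ a + b * i)
    (hj : m ∣ a + b * j) : i ≡ j [MOD m] :=
  ModEq.cancel_left_of_coprime hb.symm <| ModEq.add_left_cancel' a <|
    (modEq_zero_iff_dvd.mpr hi).trans (modEq_zero_iff_dvd.mpr hj).symm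

theorem lt_of_dvd_add_mul_of_ne (hb : b.Coprime m) {i j : ℕ} (hi : i ∈ Icc 1 n)
    (hj : j ∈ Icc 1 n) (hij : i ≠ j) (hmi : m ∣ a + b * i) (hmj : m ∣ a + b * j) :
    m < n := by
  have hmod := modEq_of_dvd_add_mul hb hmi hmj
  rw [mem_Icc] at hi hj
  rcases hij.lt_or_gt with hlt | hlt
  · have := le_of_dvd (Nat.sub_pos_of_lt hlt) ((modEq_iff_dvd' hlt.le).mp hmod)
    omega
  · have := le_of_dvd (Nat.sub_pos_of_lt hlt) ((modEq_iff_dvd' hlt.le).mp hmod.symm)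
    omega

theorem not_dvd_of_dvd_add_mul (hab : a.Coprime b) (hp : p.Prime) {i : ℕ}
    (h : p ∣ a + b * i) : ¬p ∣ b := fun hpb =>
  hp.one_lt.ne' <| eq_one_of_dvd_coprimes hab
    ((Nat.dvd_add_left (dvd_mul_of_dvd_left hpb i)).mp h) hpb

theorem exists_dvd_add_mul_iff_modEq_s4 [NeZero m] (hb : b.Coprime m) (a : ℕ) :
    ∃ v, ∀ j, m ∣ a + b * j ↔ j ≡ v [MOD m] := by
  let u := ZMod.unitOfCoprime b hb
  refine ⟨(↑u⁻¹ * -(a : ZMod m)).val, fun j => ?_⟩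
  rw [← ZMod.natCast_eq_natCast_iff, ZMod.natCast_zmod_val, ← ZMod.natCast_eq_zero_iff,
    Units.eq_inv_mul_iff_mul_eq, ZMod.coe_unitOfCoprime]
  push_cast
  constructor <;> intro h <;> linear_combination h

theorem exists_card_filter_range_dvd_add_mul (hm : m ≠ 0) (hb : b.Coprime m) (a n : ℕ) :
    ∃ δ ≤ 1, #{j ∈ range n | m ∣ a + b * j} = n / m + δ := by
  have : NeZero m := ⟨hm⟩
  obtain ⟨v, hv⟩ := exists_dvd_add_mul_iff_modEq_s4 hb a
  refine ⟨if v % m < n % m then 1 else 0, by split_ifs <;> simp, ?_⟩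
  rw [← count_modEq_card n (Nat.pos_of_ne_zero hm) v, count_eq_card_filter_range]
  simp_rw [hv]

theorem exists_card_filter_Icc_dvd_add_mul (hm : m ≠ 0) (hb : b.Coprime m) (a n : ℕ) :
    ∃ δ ≤ 1, #{i ∈ Icc 1 n | m ∣ a + b * i} = n / m + δ := by
  have : Icc 1 n = (range n).map (addRightEmbedding 1) := by
    rw [range_eq_Ico, map_add_right_Ico]; rfl
  rw [this, filter_map, card_map]
  simpa [mul_add, add_assoc, add_comm, add_left_comm] using
    exists_card_filter_range_dvd_add_mul hm hb (a + b) n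

theorem div_le_card_filter_dvd_add_mul (hm : m ≠ 0) (hb : b.Coprime m) (a n : ℕ) :
    n / m ≤ #{i ∈ Icc 1 n | m ∣ a + b * i} := by
  obtain ⟨δ, -, hδ⟩ := exists_card_filter_Icc_dvd_add_mul hm hb a n
  omega

theorem card_filter_dvd_add_mul_le (hm : m ≠ 0) (hb : b.Coprime m) (a n : ℕ) :
    #{i ∈ Icc 1 n | m ∣ a + b * i} ≤ n / m + 1 := by
  obtain ⟨δ, hδ, hcard⟩ := exists_card_filter_Icc_dvd_add_mul hm hb a n
  omega

end ArithmeticProgression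

theorem sum_factorization_eq_sum_card {ι : Type*} {s : Finset ι} {c : ι → ℕ} {p K : ℕ}
    (hp : p.Prime) (hc : ∀ i ∈ s, c i ≠ 0) (hcK : ∀ i ∈ s, c i < p ^ K) :
    ∑ i ∈ s, (c i).factorization p = ∑ k ∈ Ico 1 K, #{i ∈ s | p ^ k ∣ c i} := by
  rw [sum_congr rfl fun i hi =>
    factorization_eq_card_pow_dvd_of_lt hp (pos_of_ne_zero (hc i hi)) (hcK i hi)]
  simp_rw [card_filter]
  exact sum_comm

theorem factorization_factorial_eq_sum_div_pow {n p K : ℕ} (hp : p.Prime) (hK : n < p ^ K) :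
    (n)!.factorization p = ∑ k ∈ Ico 1 K, n / p ^ k := by
  rcases n.eq_zero_or_pos with rfl | hn
  · simp
  · exact factorization_factorial hp (log_lt_of_lt_pow hn.ne' hK)

theorem dvd_prod_pow_log_of_forall_pow_le {m n : ℕ} (hm : m ≠ 0)
    (h : ∀ p ∈ m.primeFactors, p ^ m.factorization p ≤ n) :
    m ∣ ∏ p ∈ (range (n + 1)).filter Nat.Prime, p ^ log p n := by
  have hsub : m.primeFactors ⊆ (range (n + 1)).filter Nat.Prime := fun p hp => by
    have hp' := prime_of_mem_primeFactors hp
    have hpos : 0 < m.factorization p :=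
      hp'.factorization_pos_of_dvd hm (dvd_of_mem_primeFactors hp)
    have := (le_self_pow hpos.ne' p).trans (h p hp)
    simpa [Nat.lt_succ_iff, this] using hp'
  calc m = ∏ p ∈ m.primeFactors, p ^ m.factorization p :=
        (prod_factorization_pow_eq_self hm).symm
    _ ∣ ∏ p ∈ m.primeFactors, p ^ log p n := prod_dvd_prod_of_dvd _ _ fun p hp =>
        pow_dvd_pow p <| (le_log_iff_pow_le (prime_of_mem_primeFactors hp).one_lt
          ((pow_pos (pos_of_mem_primeFactors hp) _).trans_le (h p hp)).ne').mpr (h p hp)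
    _ ∣ _ := prod_dvd_prod_of_subset _ _ _ hsub

section PrimeValuation

variable {a b n p : ℕ}

theorem factorization_prod_add_mul (hb : b ≠ 0) (p : ℕ) :
    (∏ i ∈ Icc 1 n, (a + b * i)).factorization p =
      ∑ i ∈ Icc 1 n, (a + b * i).factorization p := by
  rw [factorization_prod fun i hi => by have := (mem_Icc.mp hi).1; positivity,
    Finsupp.finsetSum_apply]

theorem sum_factorization_add_mul_eq_sum_card (hp : p.Prime) (hb : b ≠ 0) {s : Finset ℕ}
    (hs : s ⊆ Icc 1 n) {K : ℕ} (hK : a + b * n < p ^ K) :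
    ∑ i ∈ s, (a + b * i).factorization p =
      ∑ k ∈ Ico 1 K, #{i ∈ s | p ^ k ∣ a + b * i} :=
  sum_factorization_eq_sum_card hp (fun i hi => by have := (mem_Icc.mp (hs hi)).1; positivity)
    fun i hi => lt_of_le_of_lt (by have := (mem_Icc.mp (hs hi)).2; gcongr) hK

theorem exists_factorization_factorial_eq_sum_div_pow (hp : p.Prime) (hb : b ≠ 0) :
    ∃ K, a + b * n < p ^ K ∧ (n)!.factorization p = ∑ k ∈ Ico 1 K, n / p ^ k := by
  have hK := Nat.lt_pow_self (n := a + b * n) hp.one_lt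
  refine ⟨_, hK, factorization_factorial_eq_sum_div_pow hp ?_⟩
  exact ((Nat.le_mul_of_pos_left n (pos_of_ne_zero hb)).trans (Nat.le_add_left _ a)).trans_lt hK

theorem factorial_dvd_prod_add_mul (hb : (n)!.Coprime b) (a : ℕ) :
    (n)! ∣ ∏ i ∈ Icc 1 n, (a + b * i) := by
  rcases eq_or_ne b 0 with rfl | hb0
  · rw [coprime_zero_right] at hb
    simp [hb]
  rw [← factorization_le_iff_dvd (factorial_ne_zero n)
    (prod_ne_zero_iff.mpr fun i hi => by have := (mem_Icc.mp hi).1; positivity)]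
  intro p
  by_cases hp : p.Prime
  swap
  · simp [factorization_eq_zero_of_not_prime _ hp]
  rcases lt_or_ge n p with hnp | hpn
  · simp [factorization_factorial_eq_zero_of_lt hnp]
  have hpb : ¬p ∣ b :=
    hp.coprime_iff_not_dvd.mp (hb.coprime_dvd_left (dvd_factorial hp.pos hpn))
  obtain ⟨K, hK, hfact⟩ := exists_factorization_factorial_eq_sum_div_pow (a := a) hp hb0
  rw [hfact, factorization_prod_add_mul hb0,
    sum_factorization_add_mul_eq_sum_card hp hb0 subset_rfl hK]
  gcongr with k
  exact div_le_card_filter_dvd_add_mul (pow_ne_zero k hp.ne_zero)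
    (hp.coprime_pow_of_not_dvd hpb) a n

theorem factorization_prod_add_mul_le (hp : p.Prime) (hpb : ¬p ∣ b) {i₀ : ℕ}
    (hi₀ : i₀ ∈ Icc 1 n)
    (hmax : ∀ i ∈ Icc 1 n, (a + b * i).factorization p ≤ (a + b * i₀).factorization p) :
    (∏ i ∈ Icc 1 n, (a + b * i)).factorization p ≤
      (n)!.factorization p + (a + b * i₀).factorization p := by
  have hb0 : b ≠ 0 := by rintro rfl; exact hpb (dvd_zero p)
  obtain ⟨K, hK, hfact⟩ := exists_factorization_factorial_eq_sum_div_pow (a := a) hp hb0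
  rw [factorization_prod_add_mul hb0, ← add_sum_erase _ _ hi₀, add_comm, hfact,
    sum_factorization_add_mul_eq_sum_card hp hb0 (erase_subset _ _) hK]
  gcongr with k
  rw [filter_erase]
  by_cases hk : p ^ k ∣ a + b * i₀
  · rw [card_erase_of_mem (mem_filter.mpr ⟨hi₀, hk⟩)]
    exact Nat.sub_le_of_le_add <|
      card_filter_dvd_add_mul_le (pow_ne_zero k hp.ne_zero) (hp.coprime_pow_of_not_dvd hpb) a n
  · have hne : ∀ i ∈ Icc 1 n, a + b * i ≠ 0 := fun i hi => by
      have := (mem_Icc.mp hi).1; positivity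
    suffices {i ∈ Icc 1 n | p ^ k ∣ a + b * i} = ∅ by simp [this]
    refine filter_eq_empty_iff.mpr fun i hi hki => hk ?_
    rw [hp.pow_dvd_iff_le_factorization (hne i₀ hi₀)] at hk ⊢
    exact ((hp.pow_dvd_iff_le_factorization (hne i hi)).mp hki).trans (hmax i hi)

theorem factorization_factorial_lt_factorization_prod (hp : p.Prime) (hpb : ¬p ∣ b) {i k : ℕ}
    (hi : i ∈ Icc 1 n) (hk : p ^ k ∣ a + b * i) (hnk : n < p ^ k) :
    (n)!.factorization p < (∏ i ∈ Icc 1 n, (a + b * i)).factorization p := by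
  have hb0 : b ≠ 0 := by rintro rfl; exact hpb (dvd_zero p)
  obtain ⟨K, hK, hfact⟩ := exists_factorization_factorial_eq_sum_div_pow (a := a) hp hb0
  rw [hfact, factorization_prod_add_mul hb0,
    sum_factorization_add_mul_eq_sum_card hp hb0 subset_rfl hK]
  obtain ⟨hi1, hin⟩ := mem_Icc.mp hi
  refine sum_lt_sum (fun k _ => div_le_card_filter_dvd_add_mul (pow_ne_zero k hp.ne_zero)
    (hp.coprime_pow_of_not_dvd hpb) a n) ⟨k, mem_Ico.mpr ⟨?_, ?_⟩, ?_⟩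
  · refine Nat.one_le_iff_ne_zero.mpr ?_
    rintro rfl
    rw [pow_zero] at hnk
    omega
  · have hki : p ^ k ≤ a + b * i := le_of_dvd (by positivity) hk
    have hin' : a + b * i ≤ a + b * n := by gcongr
    exact (Nat.pow_lt_pow_iff_right hp.one_lt).mp (by omega)
  · rw [div_eq_of_lt hnk]
    exact Finset.card_pos.mpr ⟨i, mem_filter.mpr ⟨hi, hk⟩⟩

end PrimeValuation

section PrimePart

def primePart (Q : ℕ) (S : ℕ → Prop) [DecidablePred S] : ℕ :=
  (Q.factorization.filter S).prod (· ^ ·)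

variable {Q : ℕ} {S T : ℕ → Prop} [DecidablePred S] [DecidablePred T]

theorem factorization_primePart : (primePart Q S).factorization = Q.factorization.filter S :=
  prod_pow_factorization_eq_self fun _ hp =>
    prime_of_mem_primeFactors (mem_filter.mp hp).1

theorem primePart_ne_zero : primePart Q S ≠ 0 :=
  Finsupp.prod_ne_zero_iff.mpr fun _ hp =>
    pow_ne_zero _ (prime_of_mem_primeFactors (mem_filter.mp hp).1).ne_zero

theorem primePart_dvd {m : ℕ} (hm : m ≠ 0)
    (h : ∀ p, S p → Q.factorization p ≤ m.factorization p) : primePart Q S ∣ m := by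
  rw [← factorization_le_iff_dvd primePart_ne_zero hm, factorization_primePart]
  intro p
  rw [Finsupp.filter_apply]
  split_ifs with hp
  exacts [h p hp, zero_le _]

theorem coprime_primePart (h : ∀ p, S p → ¬T p) : (primePart Q S).Coprime (primePart Q T) := by
  refine coprime_of_dvd fun p hp hpS hpT => ?_
  have hS := hp.factorization_pos_of_dvd (primePart_ne_zero) hpS
  have hT := hp.factorization_pos_of_dvd (primePart_ne_zero) hpT
  rw [factorization_primePart, Finsupp.filter_apply] at hS hT
  split_ifs at hS hT with hSp hTp
  exacts [h p hSp hTp, lt_irrefl 0 hT, lt_irrefl 0 hS, lt_irrefl 0 hS]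

theorem prod_primePart_fiberwise {ι : Type*} [DecidableEq ι] {s : Finset ι} {I : ℕ → ι}
    (hQ : Q ≠ 0) (hI : ∀ p ∈ Q.primeFactors, I p ∈ s) :
    ∏ i ∈ s, primePart Q (I · = i) = Q := by
  refine eq_of_factorization_eq (prod_ne_zero_iff.mpr fun i _ => primePart_ne_zero) hQ
    fun p => ?_
  rw [factorization_prod fun i _ => primePart_ne_zero, Finsupp.finsetSum_apply]
  simp_rw [factorization_primePart, Finsupp.filter_apply]
  rw [sum_ite_eq]
  split_ifs with hp
  · rfl
  · by_contra hne
    exact hp (hI p (support_factorization Q ▸ Finsupp.mem_support_iff.mpr (Ne.symm hne)))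

end PrimePart

section Construction

variable {a b n p : ℕ}

theorem factorization_prod_div_factorial_le (hab : a.Coprime b) (hnb : (n)!.Coprime b)
    {i₀ : ℕ} (hi₀ : i₀ ∈ Icc 1 n)
    (hmax : ∀ i ∈ Icc 1 n, (a + b * i).factorization p ≤ (a + b * i₀).factorization p) :
    ((∏ i ∈ Icc 1 n, (a + b * i)) / (n)!).factorization p ≤
      (a + b * i₀).factorization p := by
  rw [factorization_div (factorial_dvd_prod_add_mul hnb a), Finsupp.tsub_apply]
  by_cases hp : p.Prime ∧ p ∣ ∏ i ∈ Icc 1 n, (a + b * i)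
  · obtain ⟨i, -, hpi⟩ := (Prime.dvd_finsetProd_iff hp.1.prime _).mp hp.2
    have := factorization_prod_add_mul_le hp.1 (not_dvd_of_dvd_add_mul hab hp.1 hpi) hi₀ hmax
    omega
  · have : (∏ i ∈ Icc 1 n, (a + b * i)).factorization p = 0 :=
      (factorization_eq_zero_iff _ p).mpr (by tauto)
    omega

theorem pow_le_of_factorization_prod_div_factorial_eq_zero (hnb : (n)!.Coprime b) {q k i : ℕ}
    (hq : q.Prime) (hqb : ¬q ∣ b) (hi : i ∈ Icc 1 n) (hk : q ^ k ∣ a + b * i)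
    (h0 : ((∏ i ∈ Icc 1 n, (a + b * i)) / (n)!).factorization q = 0) : q ^ k ≤ n := by
  by_contra! hnk
  have := factorization_factorial_lt_factorization_prod hq hqb hi hk hnk
  rw [factorization_div (factorial_dvd_prod_add_mul hnb a), Finsupp.tsub_apply] at h0
  omega

theorem pow_factorization_le_of_primePart_eq_one (hab : a.Coprime b) (hnb : (n)!.Coprime b)
    (ha : 0 < a) {I : ℕ → ℕ} (hI : ∀ p, I p ∈ Icc 1 n)
    (hImax : ∀ p, ∀ j ∈ Icc 1 n,
      (a + b * j).factorization p ≤ (a + b * I p).factorization p)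
    {i : ℕ} (hi : i ∈ Icc 1 n)
    (h1 : primePart ((∏ j ∈ Icc 1 n, (a + b * j)) / (n)!) (I · = i) = 1) :
    ∀ q ∈ (a + b * i).primeFactors, q ^ (a + b * i).factorization q ≤ n := by
  intro q hq
  have hqp := prime_of_mem_primeFactors hq
  have hqb := not_dvd_of_dvd_add_mul hab hqp (dvd_of_mem_primeFactors hq)
  by_cases hIq : I q = i
  · refine pow_le_of_factorization_prod_div_factorial_eq_zero hnb hqp hqb hi (ordProj_dvd _ _) ?_
    simpa [factorization_primePart, hIq] using congrArg (·.factorization q) h1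
  · have hdvd : q ^ (a + b * i).factorization q ∣ a + b * I q :=
      (hqp.pow_dvd_iff_le_factorization (by omega)).mpr (hImax q i hi)
    exact (lt_of_dvd_add_mul_of_ne (hqp.coprime_pow_of_not_dvd hqb) hi (hI q) (Ne.symm hIq)
      (ordProj_dvd _ _) hdvd).le

end Construction

end Nat

theorem stmt4_general (n a b : ℕ) (hn : 0 < n) (ha : 0 < a)
    (hab : Nat.gcd a b = 1) (hnb : Nat.gcd n.factorial b = 1)
    (hbig : a + b >
      ∏ p ∈ (Finset.range (n + 1)).filter Nat.Prime, p ^ Nat.log p n) :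
    ∃ f : ℕ → ℕ,
      (∏ i ∈ Finset.Icc 1 n, (a + b * i)) / n.factorial =
        ∏ i ∈ Finset.Icc 1 n, f i ∧
      (∀ i ∈ Finset.Icc 1 n, 1 < f i ∧ f i ∣ a + b * i) ∧
      (∀ i ∈ Finset.Icc 1 n, ∀ j ∈ Finset.Icc 1 n, i ≠ j →
        Nat.gcd (f i) (f j) = 1) := by
  set Q := (∏ i ∈ Finset.Icc 1 n, (a + b * i)) / n.factorial
  have hc0 : ∀ i, a + b * i ≠ 0 := fun i => by omega
  have hQ0 : Q ≠ 0 := (Nat.div_pos (Nat.le_of_dvd (Nat.pos_of_ne_zero (prod_ne_zero_iff.mpr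
    fun i _ => hc0 i)) (Nat.factorial_dvd_prod_add_mul hnb a)) n.factorial_pos).ne'
  choose I hI hImax using fun p => exists_max_image (Icc 1 n)
    (fun j => (a + b * j).factorization p) (nonempty_Icc.mpr hn)
  refine ⟨fun i => Nat.primePart Q (I · = i),
    (Nat.prod_primePart_fiberwise hQ0 fun p _ => hI p).symm,
    fun i hi => ⟨?_, Nat.primePart_dvd (hc0 i) fun p hp =>
      hp ▸ Nat.factorization_prod_div_factorial_le hab hnb (hI p) (hImax p)⟩,
    fun i _ j _ hij => Nat.coprime_primePart fun p hpi hpj => hij (hpi.symm.trans hpj)⟩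
  by_contra! hle
  have h1 : Nat.primePart Q (I · = i) = 1 := by
    have := Nat.primePart_ne_zero (Q := Q) (S := (I · = i))
    omega
  have hdvd := Nat.dvd_prod_pow_log_of_forall_pow_le (hc0 i)
    (Nat.pow_factorization_le_of_primePart_eq_one hab hnb ha hI hImax hi h1)
  have hL := Nat.le_of_dvd (prod_pos fun p hp => pow_pos (mem_filter.mp hp).2.pos _) hdvd
  have : a + b ≤ a + b * i := by have := (mem_Icc.mp hi).1; nlinarith
  omega

theorem stmt4 (n a b : ℕ) (hn : 0 < n) (ha : 0 < a) (hb : 0 < b)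
    (hab : Nat.gcd a b = 1) (hnb : Nat.gcd n.factorial b = 1)
    (hbig : a + b >
      ∏ p ∈ (Finset.range (n + 1)).filter Nat.Prime, p ^ Nat.log p n) :
    ∃ f : ℕ → ℕ,
      (∏ i ∈ Finset.Icc 1 n, (a + b * i)) / n.factorial =
        ∏ i ∈ Finset.Icc 1 n, f i ∧
      (∀ i ∈ Finset.Icc 1 n, 1 < f i ∧ f i ∣ a + b * i) ∧
      (∀ i ∈ Finset.Icc 1 n, ∀ j ∈ Finset.Icc 1 n, i ≠ j →
        Nat.gcd (f i) (f j) = 1) :=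
  stmt4_general n a b hn ha hab hnb hbig
end

section
/- For any positive integers n, a, b with gcd(a, b) = 1, gcd(n!, b) = 1, and a + b > lcm(1, 2, ..., n), the product (a+b)(a+2b)···(a+nb) has at least n distinct prime factors. -/
/-! For each prime `p` dividing the product, pick an index `j_p ∈ [1, n]` at which `v_p(a + b j)` is
maximal. With fewer than `n` primes, some index `i` is never picked. For every prime power
`p^k ∣ a + b i` we then also have `p^k ∣ a + b j_p` with `j_p ≠ i`, so `p^k ∣ b (j_p - i)`; as `p ∤ b`
this gives `p^k ∣ |j_p - i| ≤ n`. Hence `a + b i ∣ lcm(1, …, n) < a + b ≤ a + b i`, which is absurd. -/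

theorem exists_forall_factorization_le_of_card_primeFactors_lt {ι : Type*} [DecidableEq ι]
    {s : Finset ι} {f : ι → ℕ} (hf : ∀ i ∈ s, f i ≠ 0)
    (hcard : (∏ i ∈ s, f i).primeFactors.card < s.card) :
    ∃ i ∈ s, ∀ p ∈ (f i).primeFactors,
      ∃ j ∈ s, j ≠ i ∧ (f i).factorization p ≤ (f j).factorization p := by
  have hs : s.Nonempty := Finset.card_pos.mp (by omega)
  choose g hgs hgmax using fun p => s.exists_max_image (fun i => (f i).factorization p) hs
  obtain ⟨i, hi, hig⟩ :=
    Finset.exists_mem_notMem_of_card_lt_card ((Finset.card_image_le (f := g)).trans_lt hcard)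
  refine ⟨i, hi, fun p hp => ⟨g p, hgs p, ?_, hgmax p i hi⟩⟩
  rintro rfl
  refine hig (Finset.mem_image_of_mem g ?_)
  exact Nat.primeFactors_mono (Finset.dvd_prod_of_mem f hi) (Finset.prod_ne_zero_iff.mpr hf) hp

theorem dvd_sub_of_dvd_add_mul {a b m i j : ℕ} (hab : a.Coprime b) (hi : m ∣ a + b * i)
    (hj : m ∣ a + b * j) : m ∣ j - i := by
  have hmb : m.Coprime b :=
    Nat.Coprime.coprime_dvd_left hi ((Nat.coprime_add_mul_left_left a b i).mpr hab)
  refine hmb.dvd_of_dvd_mul_left ?_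
  have hsub : a + b * j - (a + b * i) = b * (j - i) := by rw [Nat.mul_sub]; omega
  exact hsub ▸ Nat.dvd_sub hj hi

theorem dvd_lcm_Icc_of_dvd_add_mul {a b m i j n : ℕ} (hab : a.Coprime b)
    (hi : i ∈ Finset.Icc 1 n) (hj : j ∈ Finset.Icc 1 n) (hij : i ≠ j)
    (hmi : m ∣ a + b * i) (hmj : m ∣ a + b * j) : m ∣ (Finset.Icc 1 n).lcm id := by
  wlog hlt : i < j generalizing i j
  · exact this hj hi hij.symm hmj hmi (hij.lt_or_gt.resolve_left hlt)
  rw [Finset.mem_Icc] at hi hj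
  exact (dvd_sub_of_dvd_add_mul hab hmi hmj).trans
    (Finset.dvd_lcm (Finset.mem_Icc.mpr ⟨by omega, by omega⟩))

theorem add_mul_dvd_lcm_Icc {a b i n : ℕ} (hab : a.Coprime b) (hi : i ∈ Finset.Icc 1 n)
    (hne : ∀ j ∈ Finset.Icc 1 n, a + b * j ≠ 0)
    (hmax : ∀ p ∈ (a + b * i).primeFactors, ∃ j ∈ Finset.Icc 1 n,
      j ≠ i ∧ (a + b * i).factorization p ≤ (a + b * j).factorization p) :
    a + b * i ∣ (Finset.Icc 1 n).lcm id := by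
  rw [Nat.dvd_iff_prime_pow_dvd_dvd]
  intro p k hp hpk
  rcases k.eq_zero_or_pos with rfl | hk
  · simp
  have hpi : p ∈ (a + b * i).primeFactors :=
    Nat.mem_primeFactors.mpr ⟨hp, (dvd_pow_self p hk.ne').trans hpk, hne i hi⟩
  obtain ⟨j, hj, hji, hle⟩ := hmax p hpi
  have hpkj : p ^ k ∣ a + b * j := (hp.pow_dvd_iff_le_factorization (hne j hj)).mpr
    (((hp.pow_dvd_iff_le_factorization (hne i hi)).mp hpk).trans hle)
  exact dvd_lcm_Icc_of_dvd_add_mul hab hi hj hji.symm hpk hpkj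

theorem stmt5_general (n a b : ℕ) (ha : 0 < a)
    (hab : Nat.gcd a b = 1)
    (hbig : a + b > (Finset.Icc 1 n).lcm id) :
    n ≤ (∏ i ∈ Finset.Icc 1 n, (a + b * i)).primeFactors.card := by
  by_contra! hcard
  have hne : ∀ j ∈ Finset.Icc 1 n, a + b * j ≠ 0 := fun _ _ => by omega
  obtain ⟨i, hi, hmax⟩ :=
    exists_forall_factorization_le_of_card_primeFactors_lt hne (by simpa using hcard)
  have hL : (Finset.Icc 1 n).lcm id ≠ 0 := Finset.lcm_eq_zero_iff.not.mpr (by simp)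
  have hle := Nat.le_of_dvd (Nat.pos_of_ne_zero hL) (add_mul_dvd_lcm_Icc hab hi hne hmax)
  have hbi : b ≤ b * i := Nat.le_mul_of_pos_right _ (Finset.mem_Icc.mp hi).1
  omega

theorem stmt5 (n a b : ℕ) (hn : 0 < n) (ha : 0 < a) (hb : 0 < b)
    (hab : Nat.gcd a b = 1) (hnb : Nat.gcd n.factorial b = 1)
    (hbig : a + b > (Finset.Icc 1 n).lcm id) :
    n ≤ (∏ i ∈ Finset.Icc 1 n, (a + b * i)).primeFactors.card :=
  stmt5_general n a b ha hab hbig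
end

section
/- For positive integers m and n, the quotient (m+1)(m+2)···(m+n)/n! can be written as ∏_{i=1}^n a_i where each a_i is a positive integer dividing m+i and gcd(a_i, a_j) = 1 for all 1 ≤ i ≠ j ≤ n. -/
/-!
`(m+1)⋯(m+n) / n! = C(m+n, n) = ∏ p ^ v_p`, where `v_p` is the `p`-adic valuation of the
binomial coefficient. By Kummer's theorem `v_p` is the number of carries when adding `m` and `n`
in base `p`. If the highest carry occurs at position `k`, then `v_p ≤ k`, and that carry says
exactly that some `m + i` with `1 ≤ i ≤ n` is a multiple of `p ^ k`. Assigning each prime power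
`p ^ v_p` to such an index `i` and letting `a_i` be the product of the prime powers assigned to
`i` gives pairwise coprime factors with `a_i ∣ m + i`.
-/

open Finset

namespace Nat

theorem prod_Icc_add_div_factorial (m n : ℕ) :
    (∏ i ∈ Icc 1 n, (m + i)) / n ! = (m + n).choose n := by
  rw [choose_eq_asc_factorial_div_factorial, ascFactorial_eq_prod_range, range_eq_Ico,
    ← Ico_add_one_right_eq_Icc, ← prod_Ico_add' (fun i => m + i) 0 n 1]
  simp only [Nat.add_assoc, Nat.add_comm 1]

theorem exists_mem_Icc_dvd_add_of_le_mod_add_mod {q m n : ℕ} (hq : 0 < q)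
    (hcarry : q ≤ n % q + m % q) : ∃ i ∈ Icc 1 n, q ∣ m + i := by
  have hm : m % q < q := mod_lt m hq
  refine ⟨q - m % q, mem_Icc.mpr ⟨by omega, by have := mod_le n q; omega⟩, m / q + 1, ?_⟩
  have := div_add_mod m q
  rw [Nat.mul_add]
  omega

theorem exists_mem_Icc_pow_factorization_choose_dvd_add {p m n : ℕ} (hp : p.Prime)
    (hpB : p ∣ (m + n).choose n) :
    ∃ i ∈ Icc 1 n, p ^ ((m + n).choose n).factorization p ∣ m + i := by
  set carries := {k ∈ Ico 1 (log p (m + n) + 1) | p ^ k ≤ n % p ^ k + m % p ^ k}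
  have hcard : ((m + n).choose n).factorization p = #carries :=
    factorization_choose' hp (lt_add_one _)
  have hne : carries.Nonempty := by
    rw [← Finset.card_pos, ← hcard]
    exact hp.factorization_pos_of_dvd (choose_pos (le_add_left n m)).ne' hpB
  set k := carries.max' hne
  have hle : #carries ≤ k := by
    calc #carries ≤ #(Icc 1 k) := card_le_card fun j hj =>
          mem_Icc.mpr ⟨(mem_Ico.mp (mem_filter.mp hj).1).1, carries.le_max' j hj⟩
      _ = k := by simp
  obtain ⟨i, hi, hdvd⟩ := exists_mem_Icc_dvd_add_of_le_mod_add_mod (pow_pos hp.pos k)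
    (mem_filter.mp (carries.max'_mem hne)).2
  exact ⟨i, hi, (pow_dvd_pow p (hcard ▸ hle)).trans hdvd⟩

section factorPart

variable {ι : Type*} [DecidableEq ι] {B : ℕ} {g : ℕ → ι}

def factorPart (B : ℕ) (g : ℕ → ι) (i : ι) : ℕ :=
  ∏ p ∈ B.primeFactors with g p = i, p ^ B.factorization p

theorem prod_factorPart {s : Finset ι} (hB : B ≠ 0) (hg : ∀ p ∈ B.primeFactors, g p ∈ s) :
    ∏ i ∈ s, factorPart B g i = B := by
  simp only [factorPart]
  rw [prod_fiberwise_of_maps_to hg, ← prod_primeFactors_pow_factorization hB]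

theorem factorPart_pos (i : ι) : 0 < factorPart B g i :=
  prod_pos fun _ hp => pow_pos (prime_of_mem_primeFactors (mem_filter.mp hp).1).pos _

theorem factorPart_dvd {i : ι} {x : ℕ}
    (hx : ∀ p ∈ B.primeFactors, g p = i → p ^ B.factorization p ∣ x) : factorPart B g i ∣ x := by
  refine prod_dvd_of_isRelPrime (fun p hp q hq hpq => ?_) fun p hp => ?_
  · rw [mem_coe, mem_filter] at hp hq
    exact coprime_iff_isRelPrime.mp <| coprime_pow_primes _ _
      (prime_of_mem_primeFactors hp.1) (prime_of_mem_primeFactors hq.1) hpq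
  · exact hx p (mem_filter.mp hp).1 (mem_filter.mp hp).2

theorem coprime_factorPart {i j : ι} (hij : i ≠ j) :
    Coprime (factorPart B g i) (factorPart B g j) := by
  refine Coprime.prod_left fun p hp => Coprime.prod_right fun q hq => ?_
  rw [mem_filter] at hp hq
  exact coprime_pow_primes _ _ (prime_of_mem_primeFactors hp.1) (prime_of_mem_primeFactors hq.1)
    (by rintro rfl; exact hij (hp.2.symm.trans hq.2))

end factorPart

end Nat

theorem stmt15_general (m n : ℕ) :
    ∃ f : ℕ → ℕ,
      (∏ i ∈ Finset.Icc 1 n, (m + i)) / n.factorial =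
        ∏ i ∈ Finset.Icc 1 n, f i ∧
      (∀ i ∈ Finset.Icc 1 n, 0 < f i ∧ f i ∣ m + i) ∧
      (∀ i ∈ Finset.Icc 1 n, ∀ j ∈ Finset.Icc 1 n, i ≠ j →
        Nat.gcd (f i) (f j) = 1) := by
  set B := (m + n).choose n
  have hB : B ≠ 0 := (Nat.choose_pos (Nat.le_add_left n m)).ne'
  have hlocal : ∀ p ∈ B.primeFactors, ∃ i ∈ Icc 1 n, p ^ B.factorization p ∣ m + i :=
    fun p hp => Nat.exists_mem_Icc_pow_factorization_choose_dvd_add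
      (Nat.prime_of_mem_primeFactors hp) (Nat.dvd_of_mem_primeFactors hp)
  choose! g hg_mem hg_dvd using hlocal
  refine ⟨Nat.factorPart B g, ?_, fun i _ => ⟨Nat.factorPart_pos i, Nat.factorPart_dvd ?_⟩,
    fun i _ j _ hij => Nat.coprime_factorPart hij⟩
  · rw [Nat.prod_Icc_add_div_factorial, Nat.prod_factorPart hB hg_mem]
  · rintro p hp rfl
    exact hg_dvd p hp

theorem stmt15 (m n : ℕ) (hm : 0 < m) (hn : 0 < n) :
    ∃ f : ℕ → ℕ,
      (∏ i ∈ Finset.Icc 1 n, (m + i)) / n.factorial =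
        ∏ i ∈ Finset.Icc 1 n, f i ∧
      (∀ i ∈ Finset.Icc 1 n, 0 < f i ∧ f i ∣ m + i) ∧
      (∀ i ∈ Finset.Icc 1 n, ∀ j ∈ Finset.Icc 1 n, i ≠ j →
        Nat.gcd (f i) (f j) = 1) :=
  stmt15_general m n
end
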